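/- arXiv:0712.2270 — 5 statements merged into one kernel-verified Lean document; each statement's English description precedes it below -/
import Mathlib

section
/- Let (Bₙ) be a sequence of subsets of X such that each Bₙ is Caratheodory measurable with respect to μ* (i.e., for every A ⊆ X, μ*(A) = μ*(A ∩ Bₙ) + μ*(A ∩ Bₙᶜ)), and let E ⊆ X satisfy μ*(Bₙ △ E) → 0 as n → ∞. Then E is Caratheodory measurable with respect to μ*. -/
open scoped symmDiff
open MeasureTheory Filter Topology

/-! Splitting a test set `A` along `E` instead of along a Carathéodory set `B` costs at most
`2 μ*(B ∆ E)`, because `A ∩ E ⊆ (A ∩ B) ∪ (B ∆ E)` and likewise for the complements. Hence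
`μ*(A ∩ E) + μ*(A \ E) ≤ μ*(A) + 2 μ*(Bₙ ∆ E)` for every `n`, and letting `n → ∞` gives the
nontrivial half of the Carathéodory condition for `E`. -/

namespace MeasureTheory

variable {α F : Type*} [FunLike F (Set α) ENNReal] [OuterMeasureClass F α] (μ : F)

theorem measure_inter_le_inter_add_symmDiff (A B E : Set α) :
    μ (A ∩ E) ≤ μ (A ∩ B) + μ (B ∆ E) := by
  refine (measure_mono fun x hx => ?_).trans (measure_union_le _ _)
  by_cases hB : x ∈ B
  · exact Or.inl ⟨hx.1, hB⟩
  · exact Or.inr (Or.inr ⟨hx.2, hB⟩)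

theorem measure_sdiff_le_sdiff_add_symmDiff (A B E : Set α) :
    μ (A \ E) ≤ μ (A \ B) + μ (B ∆ E) := by
  simpa only [Set.sdiff_eq, compl_symmDiff_compl] using
    measure_inter_le_inter_add_symmDiff μ A Bᶜ Eᶜ

theorem measure_inter_add_sdiff_le_add_symmDiff (A B E : Set α) :
    μ (A ∩ E) + μ (A \ E) ≤ μ (A ∩ B) + μ (A \ B) + 2 * μ (B ∆ E) :=
  calc μ (A ∩ E) + μ (A \ E)
      ≤ (μ (A ∩ B) + μ (B ∆ E)) + (μ (A \ B) + μ (B ∆ E)) :=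
        add_le_add (measure_inter_le_inter_add_symmDiff μ A B E)
          (measure_sdiff_le_sdiff_add_symmDiff μ A B E)
    _ = μ (A ∩ B) + μ (A \ B) + 2 * μ (B ∆ E) := by ring

end MeasureTheory

namespace MeasureTheory.OuterMeasure

theorem isCaratheodory_of_tendsto_symmDiff {α : Type*} {m : OuterMeasure α} {B : ℕ → Set α}
    {E : Set α} (hB : ∀ n, m.IsCaratheodory (B n))
    (hconv : Tendsto (fun n => m (B n ∆ E)) atTop (𝓝 0)) : m.IsCaratheodory E := by
  refine (isCaratheodory_iff_le' m).2 fun A => ?_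
  have hbound : ∀ n, m (A ∩ E) + m (A \ E) ≤ m A + 2 * m (B n ∆ E) := fun n => by
    rw [hB n A]
    exact measure_inter_add_sdiff_le_add_symmDiff m A (B n) E
  have hlim : Tendsto (fun n => m A + 2 * m (B n ∆ E)) atTop (𝓝 (m A + 2 * 0)) :=
    tendsto_const_nhds.add (ENNReal.Tendsto.const_mul hconv (Or.inr ENNReal.ofNat_ne_top))
  simpa using ge_of_tendsto' hlim hbound

end MeasureTheory.OuterMeasure

/-- If each `Bₙ` is Caratheodory measurable with respect to `μ*` and
`μ*(Bₙ △ E) → 0`, then `E` is Caratheodory measurable with respect to `μ*`. -/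
theorem stmt_4 {X : Type*} (μStar : OuterMeasure X) (B : ℕ → Set X) (E : Set X)
    (hB : ∀ n, ∀ A : Set X, μStar A = μStar (A ∩ B n) + μStar (A ∩ (B n)ᶜ))
    (hconv : Tendsto (fun n => μStar (B n ∆ E)) atTop (𝓝 0)) :
    ∀ A : Set X, μStar A = μStar (A ∩ E) + μStar (A ∩ Eᶜ) :=
  OuterMeasure.isCaratheodory_of_tendsto_symmDiff hB hconv
end

section
/- The family S̃ is an algebra of subsets of X: Ω ⊆ S̃, and if S₁, S₂ ∈ S̃ then S₁ ∪ S₂ ∈ S̃ and S₁ᶜ ∈ S̃. -/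
/-! `μ*` is the outer measure generated by the cost `μ` on `Ω` (and `∞` off `Ω`), so it is
monotone and subadditive. Since `(B ∪ C) ∆ (S ∪ T) ⊆ B ∆ S ∪ C ∆ T` and `Bᶜ ∆ Sᶜ = B ∆ S`,
approximating sequences in `Ω` for `S` and `T` yield ones for `S ∪ T` and `Sᶜ`. -/

open scoped symmDiff ENNReal
open Filter Set Topology

/-- The outer measure induced by `μ : Ω → ℝ≥0∞`:
`μ*(E) = inf { ∑ᵢ μ(Aᵢ) : E ⊆ ⋃ᵢ Aᵢ, each Aᵢ ∈ Ω }`. -/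
noncomputable def muStar {X : Type*} (Ω : Set (Set X)) (μ : Set X → ℝ≥0∞) (E : Set X) : ℝ≥0∞ :=
  ⨅ (A : ℕ → Set X) (_ : ∀ i, A i ∈ Ω) (_ : E ⊆ ⋃ i, A i), ∑' i, μ (A i)

/-- `S̃ = { S ⊆ X : ∃ (Bₙ) in Ω with μ*(Bₙ △ S) → 0 }`. -/
def Stilde {X : Type*} (Ω : Set (Set X)) (μ : Set X → ℝ≥0∞) : Set (Set X) :=
  {S | ∃ B : ℕ → Set X, (∀ n, B n ∈ Ω) ∧
    Tendsto (fun n => muStar Ω μ (B n ∆ S)) atTop (𝓝 0)}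

open MeasureTheory

namespace MeasureTheory.OuterMeasure

variable {X : Type*} (m : OuterMeasure X)

lemma tendsto_symmDiff_union {B C : ℕ → Set X} {S T : Set X}
    (hB : Tendsto (fun n => m (B n ∆ S)) atTop (𝓝 0))
    (hC : Tendsto (fun n => m (C n ∆ T)) atTop (𝓝 0)) :
    Tendsto (fun n => m ((B n ∪ C n) ∆ (S ∪ T))) atTop (𝓝 0) := by
  have hle : ∀ n, m ((B n ∪ C n) ∆ (S ∪ T)) ≤ m (B n ∆ S) + m (C n ∆ T) := fun n =>
    (measure_mono union_symmDiff_union_subset).trans (measure_union_le _ _)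
  have hsum : Tendsto (fun n => m (B n ∆ S) + m (C n ∆ T)) atTop (𝓝 0) := by
    simpa using hB.add hC
  exact tendsto_of_tendsto_of_tendsto_of_le_of_le tendsto_const_nhds hsum (fun _ => zero_le) hle

end MeasureTheory.OuterMeasure

section Stilde

variable {X : Type*} {Ω : Set (Set X)} {μ : Set X → ℝ≥0∞}

open scoped Classical in
lemma muStar_eq_ofFunction (hΩempty : ∅ ∈ Ω) (hμempty : μ ∅ = 0) :
    muStar Ω μ = OuterMeasure.ofFunction (fun A => if A ∈ Ω then μ A else ⊤)
      (by simp [hΩempty, hμempty]) := by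
  ext E
  rw [OuterMeasure.ofFunction_apply]
  apply le_antisymm
  · refine le_iInf₂ fun A hEA => ?_
    by_cases hA : ∀ i, A i ∈ Ω
    · exact iInf₂_le_of_le A hA <| iInf_le_of_le hEA <|
        (tsum_congr fun i => if_pos (hA i)).symm.le
    · obtain ⟨i, hi⟩ := not_forall.mp hA
      -- a cover using a set outside `Ω` has infinite cost
      have htop : (∑' n, if A n ∈ Ω then μ (A n) else ⊤) = ⊤ :=
        top_le_iff.mp ((if_neg hi).symm.le.trans (ENNReal.le_tsum i))
      simp [htop]
  · refine le_iInf fun A => le_iInf fun hA => le_iInf fun hEA => ?_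
    exact iInf₂_le_of_le A hEA (tsum_congr fun i => if_pos (hA i)).le

lemma subset_Stilde (hΩempty : ∅ ∈ Ω) (hμempty : μ ∅ = 0) : Ω ⊆ Stilde Ω μ := by
  intro A hA
  refine ⟨fun _ => A, fun _ => hA, ?_⟩
  simp [symmDiff_self, muStar_eq_ofFunction hΩempty hμempty]

lemma union_mem_Stilde (hΩempty : ∅ ∈ Ω) (hμempty : μ ∅ = 0)
    (hΩunion : ∀ A ∈ Ω, ∀ B ∈ Ω, A ∪ B ∈ Ω) {S T : Set X}
    (hS : S ∈ Stilde Ω μ) (hT : T ∈ Stilde Ω μ) : S ∪ T ∈ Stilde Ω μ := by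
  obtain ⟨B, hBΩ, hB⟩ := hS
  obtain ⟨C, hCΩ, hC⟩ := hT
  refine ⟨fun n => B n ∪ C n, fun n => hΩunion _ (hBΩ n) _ (hCΩ n), ?_⟩
  rw [muStar_eq_ofFunction hΩempty hμempty] at hB hC ⊢
  exact OuterMeasure.tendsto_symmDiff_union _ hB hC

lemma compl_mem_Stilde (hΩcompl : ∀ A ∈ Ω, Aᶜ ∈ Ω) {S : Set X} (hS : S ∈ Stilde Ω μ) :
    Sᶜ ∈ Stilde Ω μ := by
  obtain ⟨B, hBΩ, hB⟩ := hS
  exact ⟨fun n => (B n)ᶜ, fun n => hΩcompl _ (hBΩ n),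
    by simpa only [compl_symmDiff_compl] using hB⟩

end Stilde

theorem stmt_8_general {X : Type*} (Ω : Set (Set X)) (μ : Set X → ℝ≥0∞)
    (hΩempty : ∅ ∈ Ω)
    (hΩcompl : ∀ A ∈ Ω, Aᶜ ∈ Ω) (hΩunion : ∀ A ∈ Ω, ∀ B ∈ Ω, A ∪ B ∈ Ω)
    (hμempty : μ ∅ = 0) :
    Ω ⊆ Stilde Ω μ ∧
      (∀ S₁ ∈ Stilde Ω μ, ∀ S₂ ∈ Stilde Ω μ, S₁ ∪ S₂ ∈ Stilde Ω μ) ∧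
      (∀ S₁ ∈ Stilde Ω μ, S₁ᶜ ∈ Stilde Ω μ) :=
  ⟨subset_Stilde hΩempty hμempty,
    fun _ hS _ hT => union_mem_Stilde hΩempty hμempty hΩunion hS hT,
    fun _ hS => compl_mem_Stilde hΩcompl hS⟩

/-- `S̃` is an algebra of subsets of `X`: `Ω ⊆ S̃`, and if `S₁, S₂ ∈ S̃` then
`S₁ ∪ S₂ ∈ S̃` and `S₁ᶜ ∈ S̃`. -/
theorem stmt_8 {X : Type*} (Ω : Set (Set X)) (μ : Set X → ℝ≥0∞)
    (hΩempty : ∅ ∈ Ω) (hΩuniv : Set.univ ∈ Ω)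
    (hΩcompl : ∀ A ∈ Ω, Aᶜ ∈ Ω) (hΩunion : ∀ A ∈ Ω, ∀ B ∈ Ω, A ∪ B ∈ Ω)
    (hμempty : μ ∅ = 0) (hμfin : μ Set.univ < ⊤)
    (hμadd : ∀ A : ℕ → Set X, (∀ i, A i ∈ Ω) → Pairwise (Function.onFun Disjoint A) →
      (⋃ i, A i) ∈ Ω → μ (⋃ i, A i) = ∑' i, μ (A i)) :
    Ω ⊆ Stilde Ω μ ∧
      (∀ S₁ ∈ Stilde Ω μ, ∀ S₂ ∈ Stilde Ω μ, S₁ ∪ S₂ ∈ Stilde Ω μ) ∧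
      (∀ S₁ ∈ Stilde Ω μ, S₁ᶜ ∈ Stilde Ω μ) :=
  stmt_8_general Ω μ hΩempty hΩcompl hΩunion hμempty
end

section
/- If S₁, S₂ ∈ S̃ and S₁ ∩ S₂ = ∅, then μ*(S₁ ∪ S₂) = μ*(S₁) + μ*(S₂); that is, μ* is finitely additive on S̃. -/
open scoped symmDiff ENNReal
open Filter Set Topology

/-!
Every set of the algebra `Ω` is Carathéodory measurable for `μ*`; this only needs `μ` to be
finitely additive. If `B ∈ Ω` and `S₁ ∩ S₂ = ∅`, splitting `S₁ ∪ S₂` along `B` gives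
`μ* S₁ + μ* S₂ ≤ μ* (S₁ ∪ S₂) + 2 μ* (B △ S₁)`, and letting `B` run through a sequence
approximating `S₁` yields the reverse of subadditivity.
-/

open MeasureTheory

theorem union_eq_add_of_iUnion_eq_tsum {α : Type*} {C : Set (Set α)} {m : Set α → ℝ≥0∞}
    (hC : ∅ ∈ C) (hm : m ∅ = 0)
    (hm_iUnion : ∀ A : ℕ → Set α, (∀ i, A i ∈ C) → Pairwise (Function.onFun Disjoint A) →
      (⋃ i, A i) ∈ C → m (⋃ i, A i) = ∑' i, m (A i))
    {s t : Set α} (hs : s ∈ C) (ht : t ∈ C) (hst : s ∪ t ∈ C) (hd : Disjoint s t) :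
    m (s ∪ t) = m s + m t := by
  let A : ℕ → Set α := fun n ↦ if n = 0 then s else if n = 1 then t else ∅
  have hA : ⋃ i, A i = s ∪ t := by
    rw [← union_iUnion_nat_succ, ← union_iUnion_nat_succ]
    simp [A]
  have hA_disj : Pairwise (Function.onFun Disjoint A) := by
    rintro (_ | _ | i) (_ | _ | j) hij <;> simp_all [A, Function.onFun, hd.symm]
  have hA_mem : ∀ i, A i ∈ C := by
    rintro (_ | _ | i) <;> simp [A, hs, ht, hC]
  rw [← hA, hm_iUnion A hA_mem hA_disj (hA ▸ hst), tsum_eq_sum (s := Finset.range 2)]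
  · simp [A, Finset.sum_range_succ]
  · rintro (_ | _ | i) hi <;> simp_all [A]

theorem muStar_eq_inducedOuterMeasure {X : Type*} {Ω : Set (Set X)} {μ : Set X → ℝ≥0∞}
    (hΩ : ∅ ∈ Ω) (hμ : μ ∅ = 0) :
    muStar Ω μ = inducedOuterMeasure (fun s _ ↦ μ s) hΩ hμ := by
  ext E
  rw [inducedOuterMeasure, OuterMeasure.ofFunction_eq_iInf_mem (P := (· ∈ Ω))
    _ _ (fun _ ↦ extend_eq_top _), muStar]
  refine iInf_congr fun A ↦ iInf_congr fun hA ↦ ?_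
  simp only [extend_eq _ (hA _)]

namespace MeasureTheory.OuterMeasure

variable {α : Type*} (m : OuterMeasure α) {s t : Set α}

theorem add_le_union_add_of_isCaratheodory (hst : Disjoint s t) {B : Set α}
    (hB : m.IsCaratheodory B) :
    m s + m t ≤ m (s ∪ t) + 2 * m (B ∆ s) := by
  have hs : s ⊆ (s ∪ t) ∩ B ∪ B ∆ s := by
    intro x hx
    by_cases hxB : x ∈ B <;> simp_all [mem_symmDiff]
  have ht : t ⊆ (s ∪ t) \ B ∪ B ∆ s := by
    intro x hx
    by_cases hxB : x ∈ B <;> simp_all [mem_symmDiff, hst.notMem_of_mem_right hx]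
  calc m s + m t ≤ (m ((s ∪ t) ∩ B) + m (B ∆ s)) + (m ((s ∪ t) \ B) + m (B ∆ s)) :=
        add_le_add ((measure_mono hs).trans (measure_union_le _ _))
          ((measure_mono ht).trans (measure_union_le _ _))
    _ = m (s ∪ t) + 2 * m (B ∆ s) := by rw [hB (s ∪ t)]; ring

theorem union_eq_add_of_tendsto_symmDiff (hst : Disjoint s t) {B : ℕ → Set α}
    (hB : ∀ n, m.IsCaratheodory (B n)) (hBs : Tendsto (fun n ↦ m (B n ∆ s)) atTop (𝓝 0)) :
    m (s ∪ t) = m s + m t := by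
  have hlim : Tendsto (fun n ↦ m (s ∪ t) + 2 * m (B n ∆ s)) atTop (𝓝 (m (s ∪ t))) := by
    simpa using
      tendsto_const_nhds.add (ENNReal.Tendsto.const_mul hBs (Or.inr ENNReal.ofNat_ne_top))
  exact le_antisymm (measure_union_le s t)
    (ge_of_tendsto' hlim fun n ↦ m.add_le_union_add_of_isCaratheodory hst (hB n))

end MeasureTheory.OuterMeasure

theorem stmt_10_general {X : Type*} (Ω : Set (Set X)) (μ : Set X → ℝ≥0∞)
    (hΩempty : ∅ ∈ Ω)
    (hΩcompl : ∀ A ∈ Ω, Aᶜ ∈ Ω) (hΩunion : ∀ A ∈ Ω, ∀ B ∈ Ω, A ∪ B ∈ Ω)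
    (hμempty : μ ∅ = 0)
    (hμadd : ∀ A : ℕ → Set X, (∀ i, A i ∈ Ω) → Pairwise (Function.onFun Disjoint A) →
      (⋃ i, A i) ∈ Ω → μ (⋃ i, A i) = ∑' i, μ (A i))
    (S₁ S₂ : Set X) (hS₁ : S₁ ∈ Stilde Ω μ)
    (hdisj : S₁ ∩ S₂ = ∅) :
    muStar Ω μ (S₁ ∪ S₂) = muStar Ω μ S₁ + muStar Ω μ S₂ := by
  obtain ⟨B, hBΩ, hB⟩ := hS₁
  have hΩ : IsSetRing Ω :=
    IsSetAlgebra.isSetRing ⟨hΩempty, hΩcompl, fun _ _ hs ht ↦ hΩunion _ hs _ ht⟩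
  let m : AddContent ℝ≥0∞ Ω := hΩ.addContent_of_union μ hμempty fun hs ht hd ↦
    union_eq_add_of_iUnion_eq_tsum hΩempty hμempty hμadd hs ht (hΩ.union_mem hs ht) hd
  rw [muStar_eq_inducedOuterMeasure hΩempty hμempty] at hB ⊢
  exact OuterMeasure.union_eq_add_of_tendsto_symmDiff _ (disjoint_iff_inter_eq_empty.2 hdisj)
    (fun n ↦ AddContent.isCaratheodory_inducedOuterMeasure_of_mem hΩ.isSetSemiring m (hBΩ n)) hB

/-- If `S₁, S₂ ∈ S̃` are disjoint, then `μ*(S₁ ∪ S₂) = μ*(S₁) + μ*(S₂)`. -/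
theorem stmt_10 {X : Type*} (Ω : Set (Set X)) (μ : Set X → ℝ≥0∞)
    (hΩempty : ∅ ∈ Ω) (hΩuniv : Set.univ ∈ Ω)
    (hΩcompl : ∀ A ∈ Ω, Aᶜ ∈ Ω) (hΩunion : ∀ A ∈ Ω, ∀ B ∈ Ω, A ∪ B ∈ Ω)
    (hμempty : μ ∅ = 0) (hμfin : μ Set.univ < ⊤)
    (hμadd : ∀ A : ℕ → Set X, (∀ i, A i ∈ Ω) → Pairwise (Function.onFun Disjoint A) →
      (⋃ i, A i) ∈ Ω → μ (⋃ i, A i) = ∑' i, μ (A i))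
    (S₁ S₂ : Set X) (hS₁ : S₁ ∈ Stilde Ω μ) (hS₂ : S₂ ∈ Stilde Ω μ)
    (hdisj : S₁ ∩ S₂ = ∅) :
    muStar Ω μ (S₁ ∪ S₂) = muStar Ω μ S₁ + muStar Ω μ S₂ :=
  stmt_10_general Ω μ hΩempty hΩcompl hΩunion hμempty hμadd S₁ S₂ hS₁ hdisj
end

section
/- If E ⊆ X is Caratheodory measurable with respect to μ* (i.e., for every A ⊆ X, μ*(A) = μ*(A ∩ E) + μ*(A ∩ Eᶜ)), then E ∈ S̃; that is, there exists a sequence (Bₙ) in Ω with μ*(Bₙ △ E) → 0. -/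
open scoped symmDiff ENNReal
open Filter Set Topology

/-!
Cover `E` by sets `Aᵢ ∈ Ω` with `∑ μ(Aᵢ) < μ*(E) + ε`, and let `B` be the union of the first `N`
of them, for `N` so large that the tail of the series is below `ε`. Then `μ*(E \ B)` is bounded by
that tail, while Carathéodory measurability of `E` (with `μ*(E) ≤ μ(X) < ∞`) gives
`μ*((⋃ Aᵢ) \ E) = μ*(⋃ Aᵢ) - μ*(E) < ε`, which bounds `μ*(B \ E)`; finally, again by
measurability, `μ*(B ∆ E) = μ*(B \ E) + μ*(E \ B)`.
-/

lemma Set.diff_biUnion_range_subset_iUnion_add {X : Type*} (A : ℕ → Set X) (N : ℕ) :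
    (⋃ i, A i) \ ⋃ i ∈ Finset.range N, A i ⊆ ⋃ i, A (i + N) := by
  rintro x ⟨hx, hxN⟩
  obtain ⟨i, hi⟩ := mem_iUnion.1 hx
  have hNi : N ≤ i := not_lt.1 fun h => hxN (mem_biUnion (Finset.mem_range.2 h) hi)
  exact mem_iUnion.2 ⟨i - N, by rwa [Nat.sub_add_cancel hNi]⟩

lemma biUnion_finset_mem_of_union_mem {X : Type*} {Ω : Set (Set X)}
    (hΩempty : ∅ ∈ Ω) (hΩunion : ∀ A ∈ Ω, ∀ B ∈ Ω, A ∪ B ∈ Ω)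
    {A : ℕ → Set X} (hA : ∀ i, A i ∈ Ω) (s : Finset ℕ) :
    (⋃ i ∈ s, A i) ∈ Ω := by
  classical
  induction s using Finset.induction with
  | empty => simpa using hΩempty
  | insert i s _ ih =>
    rw [Finset.set_biUnion_insert]
    exact hΩunion _ (hA i) _ ih

lemma ENNReal.exists_seq_tendsto_zero_of_forall_le {α : Type*} {s : Set α} {f : α → ℝ≥0∞}
    (h : ∀ ε ≠ 0, ∃ a ∈ s, f a ≤ ε) :
    ∃ a : ℕ → α, (∀ n, a n ∈ s) ∧ Tendsto (fun n => f (a n)) atTop (𝓝 0) := by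
  choose a has hfa using fun n : ℕ =>
    h (n : ℝ≥0∞)⁻¹ (ENNReal.inv_ne_zero.2 (ENNReal.natCast_ne_top n))
  exact ⟨a, has, tendsto_of_tendsto_of_tendsto_of_le_of_le tendsto_const_nhds
    ENNReal.tendsto_inv_nat_nhds_zero (fun _ => zero_le) hfa⟩

section muStar

variable {X : Type*} {Ω : Set (Set X)} {μ : Set X → ℝ≥0∞}

lemma muStar_le_tsum {S : Set X} {A : ℕ → Set X} (hA : ∀ i, A i ∈ Ω) (hS : S ⊆ ⋃ i, A i) :
    muStar Ω μ S ≤ ∑' i, μ (A i) :=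
  iInf_le_of_le A (iInf_le_of_le hA (iInf_le _ hS))

lemma muStar_mono {S T : Set X} (h : S ⊆ T) : muStar Ω μ S ≤ muStar Ω μ T :=
  le_iInf fun _ => le_iInf fun hA => le_iInf fun hT => muStar_le_tsum hA (h.trans hT)

lemma muStar_le_of_mem (hΩempty : ∅ ∈ Ω) (hμempty : μ ∅ = 0) {S A : Set X} (hA : A ∈ Ω)
    (hS : S ⊆ A) : muStar Ω μ S ≤ μ A := by
  classical
  set C : ℕ → Set X := Function.update (fun _ => ∅) 0 A
  have hC : ∀ i, C i ∈ Ω := fun i => by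
    rcases eq_or_ne i 0 with rfl | hi
    · simpa [C] using hA
    · simpa [C, hi] using hΩempty
  calc muStar Ω μ S ≤ ∑' i, μ (C i) :=
        muStar_le_tsum hC (hS.trans (subset_iUnion_of_subset 0 (by simp [C])))
    _ = μ A := by
        rw [tsum_eq_single 0 fun i hi => by simp [C, hi, hμempty]]
        simp [C]

lemma exists_cover_tsum_lt {S : Set X} {r : ℝ≥0∞} (h : muStar Ω μ S < r) :
    ∃ A : ℕ → Set X, (∀ i, A i ∈ Ω) ∧ S ⊆ ⋃ i, A i ∧ ∑' i, μ (A i) < r := by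
  simpa only [muStar, iInf_lt_iff, exists_prop] using h

section Caratheodory

variable {E : Set X}
  (hE : ∀ A : Set X, muStar Ω μ A = muStar Ω μ (A ∩ E) + muStar Ω μ (A ∩ Eᶜ))
include hE

lemma muStar_symmDiff_eq_of_caratheodory (B : Set X) :
    muStar Ω μ (B ∆ E) = muStar Ω μ (B \ E) + muStar Ω μ (E \ B) := by
  rw [hE (B ∆ E), add_comm]
  congr 2 <;> ext x <;>
    simp only [mem_symmDiff, mem_inter_iff, Set.mem_sdiff, mem_compl_iff] <;> tauto

lemma muStar_diff_le_of_caratheodory (hEfin : muStar Ω μ E ≠ ⊤) {U : Set X} {ε : ℝ≥0∞}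
    (hEU : E ⊆ U) (hU : muStar Ω μ U ≤ muStar Ω μ E + ε) : muStar Ω μ (U \ E) ≤ ε := by
  rw [hE U, inter_eq_right.2 hEU] at hU
  exact (ENNReal.add_le_add_iff_left hEfin).1 hU

lemma exists_mem_muStar_symmDiff_le_of_caratheodory
    (hΩempty : ∅ ∈ Ω) (hΩunion : ∀ A ∈ Ω, ∀ B ∈ Ω, A ∪ B ∈ Ω) (hEfin : muStar Ω μ E ≠ ⊤)
    {ε : ℝ≥0∞} (hε : ε ≠ 0) : ∃ B ∈ Ω, muStar Ω μ (B ∆ E) ≤ ε := by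
  have hδ : ε / 2 ≠ 0 := (ENNReal.half_pos hε).ne'
  obtain ⟨A, hAΩ, hEA, hsum⟩ := exists_cover_tsum_lt (ENNReal.lt_add_right hEfin hδ)
  have hsum_ne_top : ∑' i, μ (A i) ≠ ⊤ := ne_top_of_lt hsum
  obtain ⟨N, hN⟩ := ((ENNReal.tendsto_sum_nat_add _ hsum_ne_top).eventually
    (gt_mem_nhds (pos_iff_ne_zero.2 hδ))).exists
  set B := ⋃ i ∈ Finset.range N, A i
  have hBU : B ⊆ ⋃ i, A i := iUnion₂_subset fun i _ => subset_iUnion A i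
  have hEB : muStar Ω μ (E \ B) ≤ ε / 2 :=
    (muStar_le_tsum (fun i => hAΩ (i + N)) ((sdiff_subset_sdiff_left hEA).trans
      (diff_biUnion_range_subset_iUnion_add A N))).trans hN.le
  have hBE : muStar Ω μ (B \ E) ≤ ε / 2 :=
    (muStar_mono (sdiff_subset_sdiff_left hBU)).trans
      (muStar_diff_le_of_caratheodory hE hEfin hEA ((muStar_le_tsum hAΩ subset_rfl).trans hsum.le))
  refine ⟨B, biUnion_finset_mem_of_union_mem hΩempty hΩunion hAΩ _, ?_⟩
  calc muStar Ω μ (B ∆ E) = muStar Ω μ (B \ E) + muStar Ω μ (E \ B) :=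
        muStar_symmDiff_eq_of_caratheodory hE B
    _ ≤ ε / 2 + ε / 2 := add_le_add hBE hEB
    _ = ε := ENNReal.add_halves ε

end Caratheodory

end muStar

theorem stmt_13_general {X : Type*} (Ω : Set (Set X)) (μ : Set X → ℝ≥0∞)
    (hΩempty : ∅ ∈ Ω) (hΩuniv : Set.univ ∈ Ω)
    (hΩunion : ∀ A ∈ Ω, ∀ B ∈ Ω, A ∪ B ∈ Ω)
    (hμempty : μ ∅ = 0) (hμfin : μ Set.univ < ⊤)
    (E : Set X)
    (hE : ∀ A : Set X, muStar Ω μ A = muStar Ω μ (A ∩ E) + muStar Ω μ (A ∩ Eᶜ)) :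
    E ∈ Stilde Ω μ := by
  have hEfin : muStar Ω μ E ≠ ⊤ :=
    ne_top_of_le_ne_top hμfin.ne (muStar_le_of_mem hΩempty hμempty hΩuniv (subset_univ E))
  exact ENNReal.exists_seq_tendsto_zero_of_forall_le fun ε hε =>
    exists_mem_muStar_symmDiff_le_of_caratheodory hE hΩempty hΩunion hEfin hε

/-- If `E` is Caratheodory measurable with respect to `μ*`, then `E ∈ S̃`. -/
theorem stmt_13 {X : Type*} (Ω : Set (Set X)) (μ : Set X → ℝ≥0∞)
    (hΩempty : ∅ ∈ Ω) (hΩuniv : Set.univ ∈ Ω)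
    (hΩcompl : ∀ A ∈ Ω, Aᶜ ∈ Ω) (hΩunion : ∀ A ∈ Ω, ∀ B ∈ Ω, A ∪ B ∈ Ω)
    (hμempty : μ ∅ = 0) (hμfin : μ Set.univ < ⊤)
    (hμadd : ∀ A : ℕ → Set X, (∀ i, A i ∈ Ω) → Pairwise (Function.onFun Disjoint A) →
      (⋃ i, A i) ∈ Ω → μ (⋃ i, A i) = ∑' i, μ (A i))
    (E : Set X)
    (hE : ∀ A : Set X, muStar Ω μ A = muStar Ω μ (A ∩ E) + muStar Ω μ (A ∩ Eᶜ)) :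
    E ∈ Stilde Ω μ :=
  stmt_13_general Ω μ hΩempty hΩuniv hΩunion hμempty hμfin E hE
end

section
/- If E ∈ S̃, then E is Caratheodory measurable with respect to μ*: for every A ⊆ X, μ*(A) = μ*(A ∩ E) + μ*(A ∩ Eᶜ). -/
open scoped symmDiff ENNReal
open Filter Set Topology

open MeasureTheory Function

/-!
Every set of the algebra `Ω` is Carathéodory measurable for `μ*`, because `μ*` is the outer
measure induced by the additive content `μ`. The Carathéodory condition
`μ*(A ∩ E) + μ*(A \ E) ≤ μ*(A)` is then inherited by any `E` that is approximated by sets `Bₙ`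
of `Ω`: replacing `E` by `Bₙ` changes each term on the left by at most `μ*(Bₙ △ E) → 0`.
-/

def CountablyAdditiveOn {α : Type*} (C : Set (Set α)) (μ : Set α → ℝ≥0∞) : Prop :=
  ∀ A : ℕ → Set α, (∀ i, A i ∈ C) → Pairwise (Disjoint on A) →
    (⋃ i, A i) ∈ C → μ (⋃ i, A i) = ∑' i, μ (A i)

namespace CountablyAdditiveOn

variable {α : Type*} {C : Set (Set α)} {μ : Set α → ℝ≥0∞}

theorem iUnion_eq_tsum (hμ : CountablyAdditiveOn C μ) (hC : ∅ ∈ C) (h0 : μ ∅ = 0)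
    {β : Type*} [Countable β] {f : β → Set α} (hf : ∀ b, f b ∈ C)
    (hd : Pairwise (Disjoint on f)) (hU : (⋃ b, f b) ∈ C) :
    μ (⋃ b, f b) = ∑' b, μ (f b) := by
  cases nonempty_encodable β
  rw [← Encodable.iUnion_decode₂, ← tsum_iUnion_decode₂ μ h0]
  exact hμ _ (fun _ ↦ Encodable.iUnion_decode₂_cases hC hf)
    (Encodable.iUnion_decode₂_disjoint_on hd) (by rwa [Encodable.iUnion_decode₂])

theorem union_eq_add (hμ : CountablyAdditiveOn C μ) (hC : ∅ ∈ C) (h0 : μ ∅ = 0)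
    {s t : Set α} (hs : s ∈ C) (ht : t ∈ C) (hst : s ∪ t ∈ C) (hd : Disjoint s t) :
    μ (s ∪ t) = μ s + μ t := by
  rw [union_eq_iUnion] at hst ⊢
  rw [hμ.iUnion_eq_tsum hC h0 (Bool.forall_bool.2 ⟨ht, hs⟩) (pairwise_disjoint_on_bool.2 hd) hst,
    tsum_fintype, Fintype.sum_bool, cond_true, cond_false]

theorem isCaratheodory_inducedOuterMeasure (hμ : CountablyAdditiveOn C μ) (hC : IsSetRing C)
    (h0 : μ ∅ = 0) {s : Set α} (hs : s ∈ C) :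
    (inducedOuterMeasure (fun t (_ : t ∈ C) ↦ μ t) hC.empty_mem h0).IsCaratheodory s :=
  AddContent.isCaratheodory_inducedOuterMeasure_of_mem hC.isSetSemiring
    (hC.addContent_of_union μ h0 fun hs ht hd ↦
      hμ.union_eq_add hC.empty_mem h0 hs ht (hC.union_mem hs ht) hd) hs

end CountablyAdditiveOn

theorem muStar_eq_inducedOuterMeasure_s14 {α : Type*} {C : Set (Set α)} {μ : Set α → ℝ≥0∞}
    (hC : ∅ ∈ C) (h0 : μ ∅ = 0) :
    muStar C μ = inducedOuterMeasure (fun t (_ : t ∈ C) ↦ μ t) hC h0 := by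
  ext E
  rw [inducedOuterMeasure, OuterMeasure.ofFunction_eq_iInf_mem _ _ (P := (· ∈ C))
    (fun _ h ↦ extend_eq_top _ h)]
  refine iInf_congr fun A ↦ iInf_congr fun hA ↦ iInf_congr fun _ ↦ ?_
  exact tsum_congr fun i ↦ (extend_eq (fun t (_ : t ∈ C) ↦ μ t) (hA i)).symm

namespace MeasureTheory

theorem measure_inter_le_add_symmDiff {α F : Type*} [FunLike F (Set α) ℝ≥0∞]
    [OuterMeasureClass F α] (ν : F) (t s u : Set α) : ν (t ∩ s) ≤ ν (t ∩ u) + ν (u ∆ s) := by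
  refine (measure_mono (s := t ∩ s) fun x ⟨hxt, hxs⟩ ↦ ?_).trans (measure_union_le _ _)
  by_cases hxu : x ∈ u
  exacts [Or.inl ⟨hxt, hxu⟩, Or.inr (mem_symmDiff.2 (Or.inr ⟨hxs, hxu⟩))]

namespace OuterMeasure

theorem isCaratheodory_of_tendsto_measure_symmDiff {α ι : Type*} (ν : OuterMeasure α)
    {l : Filter ι} [l.NeBot] {B : ι → Set α} {E : Set α} (hB : ∀ i, ν.IsCaratheodory (B i))
    (hlim : Tendsto (fun i ↦ ν (B i ∆ E)) l (𝓝 0)) : ν.IsCaratheodory E := by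
  rw [isCaratheodory_iff_le']
  intro t
  have hbound : ∀ i, ν (t ∩ E) + ν (t \ E) ≤ ν t + (ν (B i ∆ E) + ν (B i ∆ E)) := fun i ↦
    calc ν (t ∩ E) + ν (t ∩ Eᶜ)
        ≤ (ν (t ∩ B i) + ν (B i ∆ E)) + (ν (t ∩ (B i)ᶜ) + ν ((B i)ᶜ ∆ Eᶜ)) :=
          add_le_add (measure_inter_le_add_symmDiff ν _ _ _)
            (measure_inter_le_add_symmDiff ν _ _ _)
      _ = ν t + (ν (B i ∆ E) + ν (B i ∆ E)) := by
          rw [compl_symmDiff_compl, add_add_add_comm, ← sdiff_eq, ← hB i t]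
  have hbound_lim : Tendsto (fun i ↦ ν t + (ν (B i ∆ E) + ν (B i ∆ E))) l (𝓝 (ν t)) := by
    simpa using (hlim.add hlim).const_add (ν t)
  exact ge_of_tendsto hbound_lim (Eventually.of_forall hbound)

end OuterMeasure

end MeasureTheory

theorem stmt_14_general {X : Type*} (Ω : Set (Set X)) (μ : Set X → ℝ≥0∞)
    (hΩempty : ∅ ∈ Ω)
    (hΩcompl : ∀ A ∈ Ω, Aᶜ ∈ Ω) (hΩunion : ∀ A ∈ Ω, ∀ B ∈ Ω, A ∪ B ∈ Ω)
    (hμempty : μ ∅ = 0)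
    (hμadd : ∀ A : ℕ → Set X, (∀ i, A i ∈ Ω) → Pairwise (Function.onFun Disjoint A) →
      (⋃ i, A i) ∈ Ω → μ (⋃ i, A i) = ∑' i, μ (A i))
    (E : Set X) (hE : E ∈ Stilde Ω μ) :
    ∀ A : Set X, muStar Ω μ A = muStar Ω μ (A ∩ E) + muStar Ω μ (A ∩ Eᶜ) := by
  have hΩ : IsSetRing Ω := (IsSetAlgebra.mk hΩempty hΩcompl
    fun s t hs ht ↦ hΩunion s hs t ht).isSetRing
  have hμ : CountablyAdditiveOn Ω μ := hμadd
  obtain ⟨B, hBΩ, hB⟩ := hE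
  rw [muStar_eq_inducedOuterMeasure_s14 hΩempty hμempty] at hB ⊢
  exact OuterMeasure.isCaratheodory_of_tendsto_measure_symmDiff _
    (fun n ↦ hμ.isCaratheodory_inducedOuterMeasure hΩ hμempty (hBΩ n)) hB

/-- If `E ∈ S̃`, then `E` is Caratheodory measurable with respect to `μ*`. -/
theorem stmt_14 {X : Type*} (Ω : Set (Set X)) (μ : Set X → ℝ≥0∞)
    (hΩempty : ∅ ∈ Ω) (hΩuniv : Set.univ ∈ Ω)
    (hΩcompl : ∀ A ∈ Ω, Aᶜ ∈ Ω) (hΩunion : ∀ A ∈ Ω, ∀ B ∈ Ω, A ∪ B ∈ Ω)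
    (hμempty : μ ∅ = 0) (hμfin : μ Set.univ < ⊤)
    (hμadd : ∀ A : ℕ → Set X, (∀ i, A i ∈ Ω) → Pairwise (Function.onFun Disjoint A) →
      (⋃ i, A i) ∈ Ω → μ (⋃ i, A i) = ∑' i, μ (A i))
    (E : Set X) (hE : E ∈ Stilde Ω μ) :
    ∀ A : Set X, muStar Ω μ A = muStar Ω μ (A ∩ E) + muStar Ω μ (A ∩ Eᶜ) :=
  stmt_14_general Ω μ hΩempty hΩcompl hΩunion hμempty hμadd E hE
end
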